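/- arXiv:2101.04217 — 5 statements merged into one kernel-verified Lean document; each statement's English description precedes it below -/
import Mathlib

section
/- Let b ∈ I and f : I → ℂ be such that the series ∑_{k=0}^∞ (β^k(b) − β^{k+1}(b)) f(β(β^k(b))) and ∑_{k=0}^∞ (β^k(β(b)) − β^{k+1}(β(b))) f(β^k(β(b))) (D_β β^{-1})(β^k(β(b))) converge absolutely. Then ∫_{s0}^{b} f(β(t)) d_β t = ∫_{s0}^{β(b)} f(u) (D_β β^{-1})(u) d_β u. -/
open Function Set ComplexConjugate

/-- The β-derivative `D_β f` of `f : ℝ → ℂ`: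
`(f (β t) - f t) / (β t - t)` for `t ≠ s0`, and `f' s0` at `t = s0`. -/
noncomputable def Dq (β : ℝ → ℝ) (s0 : ℝ) (f : ℝ → ℂ) (t : ℝ) : ℂ :=
  if t = s0 then deriv f s0 else (f (β t) - f t) / ((β t : ℂ) - (t : ℂ))

/-- The β-integral `∫_{s0}^{x} f d_β = ∑_{k} (β^k x - β^{k+1} x) f (β^k x)` (complex-valued). -/
noncomputable def betaInt (β : ℝ → ℝ) (x : ℝ) (f : ℝ → ℂ) : ℂ :=
  ∑' k : ℕ, ((β^[k] x - β^[k + 1] x : ℝ) : ℂ) * f (β^[k] x)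

/-- The β-integral `∫_{s0}^{x} f d_β` for a real-valued integrand. -/
noncomputable def betaIntR (β : ℝ → ℝ) (x : ℝ) (f : ℝ → ℝ) : ℝ :=
  ∑' k : ℕ, (β^[k] x - β^[k + 1] x) * f (β^[k] x)

/-- `∫_a^b f d_β := ∫_{s0}^b f d_β - ∫_{s0}^a f d_β`. -/
noncomputable def betaIntAB (β : ℝ → ℝ) (a b : ℝ) (f : ℝ → ℂ) : ℂ :=
  betaInt β b f - betaInt β a f

/-- `∫_a^b f d_β` for a real-valued integrand. -/
noncomputable def betaIntRAB (β : ℝ → ℝ) (a b : ℝ) (f : ℝ → ℝ) : ℝ :=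
  betaIntR β b f - betaIntR β a f

/-- `D_β β⁻¹`, viewed as a complex-valued function. -/
noncomputable def DbinvC (β βinv : ℝ → ℝ) (s0 : ℝ) : ℝ → ℂ :=
  Dq β s0 fun u => (βinv u : ℂ)

/-- The β-Sturm–Liouville operator
`ℓ_β y (t) = -(D_β β⁻¹)(t) · (D_{β⁻¹} (D_β y))(t) + r t · y t`. -/
noncomputable def ellBeta (β βinv : ℝ → ℝ) (s0 : ℝ) (r : ℝ → ℝ) (y : ℝ → ℂ) (t : ℝ) : ℂ :=
  -(DbinvC β βinv s0 t) * Dq βinv s0 (Dq β s0 y) t + (r t : ℂ) * y t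

/-- The β-Wronskian `[y,z](t) = y t · (D_{β⁻¹} z) t - z t · (D_{β⁻¹} y) t`. -/
noncomputable def wronk (βinv : ℝ → ℝ) (s0 : ℝ) (y z : ℝ → ℂ) (t : ℝ) : ℂ :=
  y t * Dq βinv s0 z t - z t * Dq βinv s0 y t

/-- The β-exponential `e_{p,β}(t) = 1 / ∏_k (1 - p(β^k t)(β^k t - β^{k+1} t))`. -/
noncomputable def ebeta (β : ℝ → ℝ) (p : ℝ → ℂ) (t : ℝ) : ℂ :=
  1 / ∏' k : ℕ, (1 - p (β^[k] t) * ((β^[k] t - β^[k + 1] t : ℝ) : ℂ))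

/-- The β-exponential `E_{p,β}(t) = ∏_k (1 + p(β^k t)(β^k t - β^{k+1} t))`. -/
noncomputable def Ebeta (β : ℝ → ℝ) (p : ℝ → ℂ) (t : ℝ) : ℂ :=
  ∏' k : ℕ, (1 + p (β^[k] t) * ((β^[k] t - β^[k + 1] t : ℝ) : ℂ))

/-- `sin_{p,β}(t) = (e_{ip,β}(t) - e_{-ip,β}(t)) / (2i)`. -/
noncomputable def sinBeta (β : ℝ → ℝ) (p : ℝ → ℂ) (t : ℝ) : ℂ :=
  (ebeta β (fun s => Complex.I * p s) t - ebeta β (fun s => -(Complex.I * p s)) t) /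
    (2 * Complex.I)

/-- `cos_{p,β}(t) = (e_{ip,β}(t) + e_{-ip,β}(t)) / 2`. -/
noncomputable def cosBeta (β : ℝ → ℝ) (p : ℝ → ℂ) (t : ℝ) : ℂ :=
  (ebeta β (fun s => Complex.I * p s) t + ebeta β (fun s => -(Complex.I * p s)) t) / 2

theorem stmt_0
    (I : Set ℝ) (hIconn : I.OrdConnected)
    (β βinv : ℝ → ℝ) (s0 : ℝ)
    (hmono : StrictMonoOn β I) (hcont : ContinuousOn β I)
    (hbij : Set.BijOn β I I) (hinv : Set.InvOn βinv β I I)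
    (hs0I : s0 ∈ I) (hfix : β s0 = s0)
    (hsign : ∀ t ∈ I, (t - s0) * (β t - t) ≤ 0)
    (huniq : ∀ t ∈ I, (t - s0) * (β t - t) = 0 → t = s0)
    (b : ℝ) (hb : b ∈ I) (f : ℝ → ℂ)
    (h1 : Summable fun j : ℕ =>
      ‖((β^[j] b - β^[j + 1] b : ℝ) : ℂ) * f (β (β^[j] b))‖)
    (h2 : Summable fun j : ℕ =>
      ‖((β^[j] (β b) - β^[j + 1] (β b) : ℝ) : ℂ) *
        (f (β^[j] (β b)) * DbinvC β βinv s0 (β^[j] (β b)))‖) :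
    betaInt β b (fun t => f (β t)) =
      betaInt β (β b) (fun u => f u * DbinvC β βinv s0 u) := by
  unfold betaInt
  apply tsum_congr
  intro k
  have hmem : ∀ n, β^[n] b ∈ I := by
    intro n
    induction n with
    | zero => simpa using hb
    | succ n ih => rw [Function.iterate_succ_apply']; exact hbij.mapsTo ih
  have e1 : β^[k] (β b) = β^[k+1] b := (Function.iterate_succ_apply β k b).symm
  have e2 : β^[k+1] (β b) = β^[k+1+1] b := (Function.iterate_succ_apply β (k+1) b).symm
  rw [e1, e2]
  set a := β^[k] b with ha
  have hu : β^[k+1] b = β a := Function.iterate_succ_apply' β k b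
  by_cases hs : β^[k+1] b = s0
  · -- all relevant iterates equal s0, both terms vanish
    have hk2 : β^[k+1+1] b = s0 := by
      rw [Function.iterate_succ_apply', hs, hfix]
    have hka : a = s0 := by
      apply hbij.injOn (hmem k) hs0I
      rw [← hu, hs, hfix]
    rw [hs, hk2, hka]
    simp
  · have haI : a ∈ I := hmem k
    have huI : β a ∈ I := hbij.mapsTo haI
    have hne : β (β a) ≠ β a := by
      intro h
      apply hs
      rw [hu]
      exact huniq (β a) huI (by rw [h]; ring)
    have hinv1 : βinv (β (β a)) = β a := hinv.1 huI
    have hinv2 : βinv (β a) = a := hinv.1 haI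
    have hDq : DbinvC β βinv s0 (β^[k+1] b) =
        (((β a : ℝ) : ℂ) - (a : ℝ)) / (((β (β a) : ℝ) : ℂ) - (β a : ℝ)) := by
      rw [hu]
      unfold DbinvC Dq
      rw [if_neg (by rw [← hu]; exact hs)]
      simp only [hinv1, hinv2]
    have hk2 : β^[k+1+1] b = β (β a) := by
      rw [Function.iterate_succ_apply', hu]
    beta_reduce
    rw [hDq, hu, hk2]
    have hcne : ((β (β a) : ℝ) : ℂ) - (β a : ℝ) ≠ 0 := by
      intro h
      apply hne
      have := sub_eq_zero.mp h
      exact_mod_cast this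
    push_cast
    field_simp
    ring
end

section
/- Let s0 ≤ b with b ∈ I, and let f, g : I → ℂ belong to L²_β(s0,b), be continuous and differentiable at s0, and suppose D_β f and D_β g are bounded on the set {β^k(b) : k ∈ ℕ₀} ∪ {s0}. Then ⟨−(D_β β^{-1})·(D_{β^{-1}} f), g⟩ = f(s0)·conj(g(s0)) − f(β^{-1}(b))·conj(g(b)) + ⟨f, D_β g⟩, where the inner products are taken over (s0,b). -/
open Function Set ComplexConjugate

theorem stmt_3
    (I : Set ℝ) (hIconn : I.OrdConnected)
    (β βinv : ℝ → ℝ) (s0 : ℝ)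
    (hmono : StrictMonoOn β I) (hcont : ContinuousOn β I)
    (hbij : Set.BijOn β I I) (hinv : Set.InvOn βinv β I I)
    (hs0I : s0 ∈ I) (hfix : β s0 = s0)
    (hsign : ∀ t ∈ I, (t - s0) * (β t - t) ≤ 0)
    (huniq : ∀ t ∈ I, (t - s0) * (β t - t) = 0 → t = s0)
    (b : ℝ) (hb : b ∈ I) (hs0b : s0 ≤ b) (f g : ℝ → ℂ)
    (hfL2 : Summable fun j : ℕ => (β^[j] b - β^[j + 1] b) * ‖f (β^[j] b)‖ ^ 2)
    (hgL2 : Summable fun j : ℕ => (β^[j] b - β^[j + 1] b) * ‖g (β^[j] b)‖ ^ 2)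
    (hfc : ContinuousAt f s0) (hgc : ContinuousAt g s0)
    (hfd : DifferentiableAt ℝ f s0) (hgd : DifferentiableAt ℝ g s0)
    (hfb : ∃ C, ∀ t ∈ insert s0 (Set.range fun j : ℕ => β^[j] b), ‖Dq β s0 f t‖ ≤ C)
    (hgb : ∃ C, ∀ t ∈ insert s0 (Set.range fun j : ℕ => β^[j] b), ‖Dq β s0 g t‖ ≤ C) :
    betaInt β b (fun t => -(DbinvC β βinv s0 t) * Dq βinv s0 f t * conj (g t)) =
      f s0 * conj (g s0) - f (βinv b) * conj (g b) +
        betaInt β b (fun t => f t * conj (Dq β s0 g t)) := by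

  rcases hs0b.eq_or_lt with heq | hsb
  · -- degenerate case b = s0
    subst heq
    have hit : ∀ k, β^[k] s0 = s0 := fun k => Function.iterate_fixed hfix k
    have hinv0 : βinv s0 = s0 := by
      have h := hinv.1 hs0I
      rwa [hfix] at h
    have h0 : ∀ F : ℝ → ℂ, betaInt β s0 F = 0 := by
      intro F
      unfold betaInt
      simp [hit]
    rw [h0, h0, hinv0]
    ring
  · set t : ℕ → ℝ := fun k => β^[k] b with ht
    have htsucc : ∀ k, t (k+1) = β (t k) := fun k => Function.iterate_succ_apply' β k b
    have ht0 : t 0 = b := rfl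
    have htI : ∀ k, t k ∈ I := by
      intro k; induction k with
      | zero => exact hb
      | succ n ih => rw [htsucc]; exact hbij.mapsTo ih
    have hts0 : ∀ k, s0 < t k := by
      intro k; induction k with
      | zero => exact hsb
      | succ n ih =>
        have h := hmono hs0I (htI n) ih
        rw [hfix] at h
        rw [htsucc]; exact h
    have htne : ∀ k, t k ≠ s0 := fun k => (hts0 k).ne'
    have hdec : ∀ k, t (k+1) < t k := by
      intro k
      have h1 := hsign (t k) (htI k)
      have h2 : (t k - s0) * (β (t k) - t k) ≠ 0 := fun h =>
        absurd (huniq (t k) (htI k) h) (htne k)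
      have h3 := hts0 k
      rw [htsucc]
      nlinarith [lt_of_le_of_ne h1 h2]
    have hanti : StrictAnti t := strictAnti_nat_of_succ_lt hdec
    have hbdd : BddBelow (Set.range t) := ⟨s0, by rintro x ⟨k, rfl⟩; exact (hts0 k).le⟩
    have hlimL : Filter.Tendsto t Filter.atTop (nhds (⨅ k, t k)) :=
      tendsto_atTop_ciInf hanti.antitone hbdd
    have hs0L : s0 ≤ ⨅ k, t k := le_ciInf fun k => (hts0 k).le
    have hLb : (⨅ k, t k) ≤ b := by
      have := ciInf_le hbdd 0
      rwa [ht0] at this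
    have hLI : (⨅ k, t k) ∈ I := hIconn.out hs0I hb ⟨hs0L, hLb⟩
    have hβL : β (⨅ k, t k) = ⨅ k, t k := by
      have h1 : Filter.Tendsto (fun k => β (t k)) Filter.atTop (nhds (β (⨅ k, t k))) :=
        (hcont _ hLI).tendsto.comp
          (tendsto_nhdsWithin_iff.mpr ⟨hlimL, Filter.Eventually.of_forall fun k => htI k⟩)
      have h2 : Filter.Tendsto (fun k => t (k+1)) Filter.atTop (nhds (⨅ k, t k)) :=
        hlimL.comp (Filter.tendsto_add_atTop_nat 1)
      have h3 : (fun k => β (t k)) = fun k => t (k+1) := funext fun k => (htsucc k).symm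
      rw [h3] at h1
      exact tendsto_nhds_unique h1 h2
    have hLs0 : (⨅ k, t k) = s0 := huniq _ hLI (by rw [hβL]; ring)
    rw [hLs0] at hlimL
    set d : ℕ → ℝ := fun k => t k - t (k+1) with hd
    have hdpos : ∀ k, 0 < d k := fun k => sub_pos.mpr (hdec k)
    have hdsum : Summable d := by
      apply summable_of_sum_range_le (c := b - s0) (fun k => (hdpos k).le)
      intro n
      have hs : ∑ i ∈ Finset.range n, d i = t 0 - t n := by
        rw [hd]; exact Finset.sum_range_sub' t n
      rw [hs, ht0]
      have := hts0 n
      linarith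
    have hβinv : ∀ k, βinv (t (k+1)) = t k := by
      intro k; rw [htsucc]; exact hinv.1 (htI k)
    have hββinv : ∀ k, β (βinv (t k)) = t k := fun k => hinv.2 (htI k)
    have hβinvne : ∀ k, βinv (t k) ≠ t k := by
      intro k h
      have h1 := hββinv k
      rw [h] at h1
      exact absurd ((htsucc k).trans h1) (hdec k).ne
    have hc1 : ∀ k, ((βinv (t k) : ℂ)) - (t k : ℂ) ≠ 0 := fun k =>
      sub_ne_zero.mpr (by exact_mod_cast hβinvne k)
    have hc2 : ∀ k, ((β (t k) : ℂ)) - (t k : ℂ) ≠ 0 := by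
      intro k
      rw [← htsucc k]
      exact sub_ne_zero.mpr (by exact_mod_cast (hdec k).ne)
    set Fa : ℝ → ℂ := fun u => -(DbinvC β βinv s0 u) * Dq βinv s0 f u * conj (g u) with hFa
    set a : ℕ → ℂ := fun k => ((d k : ℝ) : ℂ) * Fa (t k) with ha
    set c : ℕ → ℂ := fun k => ((d k : ℝ) : ℂ) * (f (t k) * conj (Dq β s0 g (t k))) with hcc
    clear_value a c Fa d t
    have hA : ∀ k, a k = (f (t k) - f (βinv (t k))) * conj (g (t k)) := by
      intro k
      have h1 := hc1 k
      have h2 := hc2 k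
      have hdk : ((d k : ℝ) : ℂ) = (t k : ℂ) - (β (t k) : ℂ) := by
        rw [hd]; push_cast [htsucc k]; ring
      simp only [ha, hFa, DbinvC, Dq, if_neg (htne k), hinv.1 (htI k), hdk]
      field_simp
      ring
    have hC : ∀ k, c k = f (t k) * conj (g (t k)) - f (t k) * conj (g (β (t k))) := by
      intro k
      have h2 := hc2 k
      have hdk : ((d k : ℝ) : ℂ) = (t k : ℂ) - (β (t k) : ℂ) := by
        rw [hd]; push_cast [htsucc k]; ring
      simp only [hcc, Dq, if_neg (htne k), map_div₀, map_sub, Complex.conj_ofReal, hdk]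
      field_simp
      ring
    -- bound for g along the orbit
    have hgt : Filter.Tendsto (fun k => g (t k)) Filter.atTop (nhds (g s0)) :=
      hgc.tendsto.comp hlimL
    obtain ⟨M, hM⟩ := hgt.norm.bddAbove_range
    have hMk : ∀ k, ‖g (t k)‖ ≤ M := fun k => hM (Set.mem_range_self k)
    have hM0 : 0 ≤ M := le_trans (norm_nonneg _) (hMk 0)
    -- bounds for Dq f, Dq g on the orbit
    obtain ⟨Cf, hCf⟩ := hfb
    obtain ⟨Cg, hCg⟩ := hgb
    have hCf' : ∀ k, ‖Dq β s0 f (t k)‖ ≤ Cf := fun k =>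
      hCf (t k) (Set.mem_insert_of_mem _ ⟨k, rfl⟩)
    have hCg' : ∀ k, ‖Dq β s0 g (t k)‖ ≤ Cg := fun k =>
      hCg (t k) (Set.mem_insert_of_mem _ ⟨k, rfl⟩)
    have hCf0 : 0 ≤ Cf := le_trans (norm_nonneg _) (hCf' 0)
    have hCg0 : 0 ≤ Cg := le_trans (norm_nonneg _) (hCg' 0)
    have hfL2' : Summable (fun k => d k * ‖f (t k)‖ ^ 2) := by
      simpa only [ht, hd] using hfL2
    -- summability of c
    have hsum1 : Summable (fun k => d k * ‖f (t k)‖) := by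
      apply Summable.of_nonneg_of_le
        (fun k => mul_nonneg (hdpos k).le (norm_nonneg _)) (fun k => ?_)
        ((hdsum.add hfL2').mul_left (1/2 : ℝ))
      have h1 := hdpos k
      have h2 := norm_nonneg (f (t k))
      have h3 := sq_nonneg (‖f (t k)‖ - 1)
      nlinarith [mul_nonneg h1.le h3]
    have hnormc : ∀ k, ‖c k‖ = d k * (‖f (t k)‖ * ‖Dq β s0 g (t k)‖) := by
      intro k
      rw [hcc]
      simp only [norm_mul, Complex.norm_real, Real.norm_of_nonneg (hdpos k).le,
        RCLike.norm_conj]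
    have hsumc : Summable c := by
      apply Summable.of_norm
      apply Summable.of_nonneg_of_le (fun k => norm_nonneg _) (fun k => ?_)
        (hsum1.mul_left Cg)
      rw [hnormc k]
      calc d k * (‖f (t k)‖ * ‖Dq β s0 g (t k)‖)
          = (d k * ‖f (t k)‖) * ‖Dq β s0 g (t k)‖ := by ring
        _ ≤ (d k * ‖f (t k)‖) * Cg := by
            exact mul_le_mul_of_nonneg_left (hCg' k)
              (mul_nonneg (hdpos k).le (norm_nonneg _))
        _ = Cg * (d k * ‖f (t k)‖) := by ring
    -- summability of a
    have hDqf : ∀ k, f (t (k+1)) - f (t k) = (((t (k+1) : ℝ) : ℂ) - (t k : ℂ)) * Dq β s0 f (t k) := by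
      intro k
      have h2 := hc2 k
      simp only [Dq, if_neg (htne k), ← htsucc k] at h2 ⊢
      field_simp
    have hsuma : Summable a := by
      rw [← summable_nat_add_iff 1]
      apply Summable.of_norm
      apply Summable.of_nonneg_of_le (fun k => norm_nonneg _) (fun k => ?_)
        (hdsum.mul_left (Cf * M))
      rw [hA (k+1), hβinv k]
      rw [norm_mul, RCLike.norm_conj, hDqf k, norm_mul]
      have hcast : ‖((t (k+1) : ℝ) : ℂ) - (t k : ℂ)‖ = d k := by
        rw [← Complex.ofReal_sub, Complex.norm_real, Real.norm_eq_abs, abs_sub_comm]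
        simp only [hd]
        exact abs_of_pos (sub_pos.mpr (hdec k))
      rw [hcast]
      calc d k * ‖Dq β s0 f (t k)‖ * ‖g (t (k+1))‖
          = d k * (‖Dq β s0 f (t k)‖ * ‖g (t (k+1))‖) := by ring
        _ ≤ d k * (Cf * M) := by
            exact mul_le_mul_of_nonneg_left
              (mul_le_mul (hCf' k) (hMk (k+1)) (norm_nonneg _) hCf0) (hdpos k).le
        _ = Cf * M * d k := by ring
    -- the telescoping part
    set e : ℕ → ℂ := fun k => a k - c k with he
    have hsume : Summable e := hsuma.sub hsumc
    have hE : ∀ k, e k = f (t k) * conj (g (t (k+1))) - f (βinv (t k)) * conj (g (t k)) := by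
      intro k
      rw [he]
      simp only
      rw [hA k, hC k, ← htsucc k]
      ring
    have hpartial : ∀ n, ∑ k ∈ Finset.range (n+1), e k
        = f (t n) * conj (g (t (n+1))) - f (βinv b) * conj (g b) := by
      intro n; induction n with
      | zero => simp [hE 0, ht0]
      | succ n ih =>
        rw [Finset.sum_range_succ, ih, hE (n+1), hβinv n]
        ring
    have hψ : Filter.Tendsto
        (fun n => f (t n) * conj (g (t (n+1))) - f (βinv b) * conj (g b)) Filter.atTop
        (nhds (f s0 * conj (g s0) - f (βinv b) * conj (g b))) := by
      have h1 : Filter.Tendsto (fun n => f (t n)) Filter.atTop (nhds (f s0)) :=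
        hfc.tendsto.comp hlimL
      have h2 : Filter.Tendsto (fun n => conj (g (t (n+1)))) Filter.atTop
          (nhds (conj (g s0))) := by
        have hg1 : Filter.Tendsto (fun n => g (t (n+1))) Filter.atTop (nhds (g s0)) :=
          hgt.comp (Filter.tendsto_add_atTop_nat 1)
        exact (Complex.continuous_conj.tendsto _).comp hg1
      exact (h1.mul h2).sub tendsto_const_nhds
    have htsume : ∑' k, e k = f s0 * conj (g s0) - f (βinv b) * conj (g b) := by
      have h1 : Filter.Tendsto (fun n => ∑ k ∈ Finset.range (n+1), e k) Filter.atTop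
          (nhds (∑' k, e k)) :=
        hsume.hasSum.tendsto_sum_nat.comp (Filter.tendsto_add_atTop_nat 1)
      simp only [hpartial] at h1
      exact tendsto_nhds_unique h1 hψ
    have hbia : betaInt β b Fa = ∑' k, a k := by
      simp only [betaInt, ha, hd, ht]
    have hbic : betaInt β b (fun u => f u * conj (Dq β s0 g u)) = ∑' k, c k := by
      simp only [betaInt, hcc, hd, ht]
    have hsplit : ∑' k, a k = ∑' k, c k + ∑' k, e k := by
      rw [← Summable.tsum_add hsumc hsume]
      congr 1
      funext k
      rw [he]
      ring
    calc betaInt β b Fa = ∑' k, a k := hbia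
      _ = ∑' k, c k + ∑' k, e k := hsplit
      _ = f s0 * conj (g s0) - f (βinv b) * conj (g b)
            + betaInt β b (fun u => f u * conj (Dq β s0 g u)) := by
          rw [htsume, hbic]; ring
end

section
/- Let a, b ∈ I with a ≤ s0 ≤ b, and let f, g : I → ℂ belong to L²_β(a,b), be continuous and differentiable at s0, and suppose D_β f and D_β g are bounded on the set {β^k(a), β^k(b) : k ∈ ℕ₀} ∪ {s0}. Then ⟨D_β f, g⟩ = f(b)·conj(g(β^{-1}(b))) − f(a)·conj(g(β^{-1}(a))) + ⟨f, −(D_β β^{-1})·(D_{β^{-1}} g)⟩, where the inner products are taken over (a,b). -/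
open Function Set ComplexConjugate

/-! On the orbit `t k = β^[k] x`, which moves monotonically towards `s0` with absolutely summable
steps, the weight `t k - t (k+1)` turns `D_β f (t k)` into `f (t k) - f (t (k+1))`, and turns the
adjoint summand into `f (t k) * conj (g (t k) - g (β⁻¹ (t k)))`. Since `β⁻¹ (t (k+1)) = t k`, the
difference of the two β-integrands telescopes to `u k - u (k+1)` with
`u k = f (t k) * conj (g (β⁻¹ (t k)))`, and `u k → f s0 * conj (g s0)` by continuity at `s0`.
Bounded β-derivatives make both series absolutely convergent. Subtracting the resulting
identities for `x = a` and `x = b` gives the formula. -/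

open Filter Topology

theorem Function.isFixedPt_of_tendsto_iterate_of_continuousWithinAt {α : Type*}
    [TopologicalSpace α] [T2Space α] {f : α → α} {s : Set α} {x y : α}
    (hy : Tendsto (fun n => f^[n] x) atTop (𝓝 y)) (hf : ContinuousWithinAt f s y)
    (hs : ∀ n, f^[n] x ∈ s) : IsFixedPt f y := by
  refine tendsto_nhds_unique ((tendsto_add_atTop_iff_nat 1).1 ?_) hy
  simp only [iterate_succ' f]
  exact hf.tendsto.comp (tendsto_nhdsWithin_iff.2 ⟨hy, Eventually.of_forall hs⟩)

theorem tsum_sub_tsum_eq_of_sub_eq_sub_succ {G : Type*} [AddCommGroup G] [TopologicalSpace G]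
    [IsTopologicalAddGroup G] [T2Space G] {A B u : ℕ → G} {L : G}
    (hA : Summable A) (hB : Summable B) (hu : Tendsto u atTop (𝓝 L))
    (h : ∀ k, A k - B k = u k - u (k + 1)) :
    ∑' k, A k - ∑' k, B k = u 0 - L := by
  have hpartial : Tendsto (fun n => ∑ k ∈ Finset.range n, (A k - B k)) atTop (𝓝 (u 0 - L)) := by
    simp only [h, Finset.sum_range_sub']
    exact tendsto_const_nhds.sub hu
  rw [← hA.tsum_sub hB]
  exact tendsto_nhds_unique (hA.sub hB).hasSum.tendsto_sum_nat hpartial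

theorem abs_sub_eq_abs_sub_sub_abs_sub_of_mem_uIcc {a b y : ℝ} (h : y ∈ uIcc a b) :
    |b - y| = |b - a| - |y - a| := by
  rcases Set.mem_uIcc.1 h with ⟨h1, h2⟩ | ⟨h1, h2⟩
  · rw [abs_of_nonneg (by linarith), abs_of_nonneg (by linarith), abs_of_nonneg (by linarith)]
    ring
  · rw [abs_of_nonpos (by linarith), abs_of_nonpos (by linarith), abs_of_nonpos (by linarith)]
    ring

theorem ofReal_sub_mul_Dq {β : ℝ → ℝ} {s0 t : ℝ} (f : ℝ → ℂ) (h : β t = t ↔ t = s0) :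
    ((t - β t : ℝ) : ℂ) * Dq β s0 f t = f t - f (β t) := by
  by_cases ht : t = s0
  · rw [h.2 ht, sub_self, sub_self, Complex.ofReal_zero, zero_mul]
  · have hne : (β t : ℂ) - t ≠ 0 := sub_ne_zero.2 (by exact_mod_cast mt h.1 ht)
    rw [Dq, if_neg ht]
    field_simp
    push_cast
    ring

section Orbit

variable {I : Set ℝ} {β : ℝ → ℝ} {s0 : ℝ}

theorem map_mem_uIcc (hmono : StrictMonoOn β I) (hs0I : s0 ∈ I) (hfix : β s0 = s0)
    (hsign : ∀ t ∈ I, (t - s0) * (β t - t) ≤ 0) {t : ℝ} (ht : t ∈ I) : β t ∈ uIcc s0 t := by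
  have hs := hsign t ht
  rcases le_total s0 t with hst | hts
  · have : s0 ≤ β t := hfix ▸ hmono.monotoneOn hs0I ht hst
    rw [Set.uIcc_of_le hst]
    rcases hst.eq_or_lt with rfl | hlt
    · exact ⟨this, hfix.le⟩
    · exact ⟨this, by nlinarith⟩
  · have : β t ≤ s0 := hfix ▸ hmono.monotoneOn ht hs0I hts
    rw [Set.uIcc_of_ge hts]
    rcases hts.eq_or_lt with rfl | hlt
    · exact ⟨hfix.ge, this⟩
    · exact ⟨by nlinarith, this⟩

theorem iterate_mem_uIcc (hIconn : I.OrdConnected) (hmono : StrictMonoOn β I) (hs0I : s0 ∈ I)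
    (hfix : β s0 = s0) (hsign : ∀ t ∈ I, (t - s0) * (β t - t) ≤ 0) {x : ℝ} (hx : x ∈ I) (k : ℕ) :
    β^[k] x ∈ uIcc s0 x := by
  induction k with
  | zero => exact Set.right_mem_uIcc
  | succ k ih =>
    rw [iterate_succ_apply']
    exact Set.uIcc_subset_uIcc_left ih
      (map_mem_uIcc hmono hs0I hfix hsign (hIconn.uIcc_subset hs0I hx ih))

theorem iterate_mem (hIconn : I.OrdConnected) (hmono : StrictMonoOn β I) (hs0I : s0 ∈ I)
    (hfix : β s0 = s0) (hsign : ∀ t ∈ I, (t - s0) * (β t - t) ≤ 0) {x : ℝ} (hx : x ∈ I) (k : ℕ) :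
    β^[k] x ∈ I :=
  hIconn.uIcc_subset hs0I hx (iterate_mem_uIcc hIconn hmono hs0I hfix hsign hx k)

theorem summable_abs_iterate_sub_iterate_succ (hIconn : I.OrdConnected)
    (hmono : StrictMonoOn β I) (hs0I : s0 ∈ I) (hfix : β s0 = s0)
    (hsign : ∀ t ∈ I, (t - s0) * (β t - t) ≤ 0) {x : ℝ} (hx : x ∈ I) :
    Summable fun k => |β^[k] x - β^[k + 1] x| := by
  have hstep (k : ℕ) : |β^[k] x - β^[k + 1] x| = |β^[k] x - s0| - |β^[k + 1] x - s0| := by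
    rw [iterate_succ_apply']
    exact abs_sub_eq_abs_sub_sub_abs_sub_of_mem_uIcc
      (map_mem_uIcc hmono hs0I hfix hsign (iterate_mem hIconn hmono hs0I hfix hsign hx k))
  refine summable_of_sum_range_le (c := |x - s0|) (fun _ => abs_nonneg _) fun n => ?_
  simp only [hstep, Finset.sum_range_sub' (fun k => |β^[k] x - s0|)]
  simp

theorem tendsto_iterate_nhds (hIconn : I.OrdConnected) (hmono : StrictMonoOn β I)
    (hcont : ContinuousOn β I) (hs0I : s0 ∈ I) (hfix : β s0 = s0)
    (hsign : ∀ t ∈ I, (t - s0) * (β t - t) ≤ 0)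
    (huniq : ∀ t ∈ I, (t - s0) * (β t - t) = 0 → t = s0) {x : ℝ} (hx : x ∈ I) :
    Tendsto (fun k => β^[k] x) atTop (𝓝 s0) := by
  have hcauchy : CauchySeq fun k => β^[k] x := by
    refine cauchySeq_of_summable_dist ?_
    simpa only [Real.dist_eq, iterate_succ_apply'] using
      summable_abs_iterate_sub_iterate_succ hIconn hmono hs0I hfix hsign hx
  obtain ⟨L, hL⟩ := cauchySeq_tendsto_of_complete hcauchy
  have hLI : L ∈ I := hIconn.uIcc_subset hs0I hx <| isClosed_Icc.mem_of_tendsto hL <|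
    Eventually.of_forall (iterate_mem_uIcc hIconn hmono hs0I hfix hsign hx)
  have hLfix : β L = L :=
    isFixedPt_of_tendsto_iterate_of_continuousWithinAt hL (hcont L hLI)
      (iterate_mem hIconn hmono hs0I hfix hsign hx)
  rwa [huniq L hLI (by rw [hLfix, sub_self, mul_zero])] at hL

end Orbit

theorem summable_ofReal_mul_of_norm_le {w : ℕ → ℝ} {c : ℕ → ℂ} {C : ℝ}
    (hw : Summable fun k => |w k|) (hc : ∀ k, ‖c k‖ ≤ C) :
    Summable fun k => (w k : ℂ) * c k :=
  (hw.mul_right C).of_norm_bounded fun k => by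
    rw [norm_mul, Complex.norm_real, Real.norm_eq_abs]
    exact mul_le_mul_of_nonneg_left (hc k) (abs_nonneg _)

theorem norm_mul_conj_le {z w : ℂ} {C D : ℝ} (hz : ‖z‖ ≤ C) (hw : ‖w‖ ≤ D) :
    ‖z * conj w‖ ≤ C * D := by
  rw [norm_mul, Complex.norm_conj]
  exact mul_le_mul hz hw (norm_nonneg _) ((norm_nonneg _).trans hz)

theorem ofReal_sub_mul_adjoint_term {β βinv : ℝ → ℝ} {s0 t : ℝ} (f g : ℝ → ℂ)
    (hβ : β t = t ↔ t = s0) (hβinv : βinv t = t ↔ t = s0) (hinv : βinv (β t) = t) :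
    ((t - β t : ℝ) : ℂ) * (f t * conj (-(DbinvC β βinv s0 t) * Dq βinv s0 g t)) =
      f t * conj (g t - g (βinv t)) := by
  have hD : ((t - β t : ℝ) : ℂ) * conj (DbinvC β βinv s0 t) = βinv t - t := by
    rw [← Complex.conj_ofReal, ← map_mul, DbinvC, ofReal_sub_mul_Dq _ hβ, hinv]
    simp only [map_sub, Complex.conj_ofReal]
  rw [← ofReal_sub_mul_Dq g hβinv]
  simp only [map_mul, map_neg, Complex.conj_ofReal]
  push_cast at hD ⊢
  linear_combination (-f t * conj (Dq βinv s0 g t)) * hD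

theorem betaInt_Dq_mul_conj_sub_betaInt_mul_conj {I : Set ℝ} {β βinv : ℝ → ℝ} {s0 x : ℝ}
    (hβ : ∀ t ∈ I, β t = t ↔ t = s0) (hβinv : ∀ t ∈ I, βinv t = t ↔ t = s0)
    (hinv : Set.LeftInvOn βinv β I) (horbit : ∀ k, β^[k] x ∈ I)
    (htend : Tendsto (fun k => β^[k] x) atTop (𝓝 s0))
    (hw : Summable fun k => |β^[k] x - β^[k + 1] x|)
    {f g : ℝ → ℂ} (hfc : ContinuousAt f s0) (hgc : ContinuousAt g s0) {Cf Cg : ℝ}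
    (hCf : ∀ k, ‖Dq β s0 f (β^[k] x)‖ ≤ Cf) (hCg : ∀ k, ‖Dq β s0 g (β^[k] x)‖ ≤ Cg) :
    betaInt β x (fun t => Dq β s0 f t * conj (g t)) -
      betaInt β x (fun t => f t * conj (-(DbinvC β βinv s0 t) * Dq βinv s0 g t)) =
      f x * conj (g (βinv x)) - f s0 * conj (g s0) := by
  obtain ⟨Mf, hMf⟩ := (hfc.tendsto.comp htend).norm.bddAbove_range
  obtain ⟨Mg, hMg⟩ := (hgc.tendsto.comp htend).norm.bddAbove_range
  have hsucc (k : ℕ) : β^[k + 1] x = β (β^[k] x) := iterate_succ_apply' β k x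
  have hinv_succ (k : ℕ) : βinv (β^[k + 1] x) = β^[k] x := by rw [hsucc, hinv (horbit k)]
  have hderiv (h : ℝ → ℂ) (k : ℕ) : ((β^[k] x - β^[k + 1] x : ℝ) : ℂ) * Dq β s0 h (β^[k] x) =
      h (β^[k] x) - h (β^[k + 1] x) := by
    rw [hsucc]; exact ofReal_sub_mul_Dq h (hβ _ (horbit k))
  have hadjoint (k : ℕ) : ((β^[k] x - β^[k + 1] x : ℝ) : ℂ) *
      (f (β^[k] x) * conj (-(DbinvC β βinv s0 (β^[k] x)) * Dq βinv s0 g (β^[k] x))) =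
      f (β^[k] x) * conj (g (β^[k] x) - g (βinv (β^[k] x))) := by
    rw [hsucc]
    exact ofReal_sub_mul_adjoint_term f g (hβ _ (horbit k)) (hβinv _ (horbit k)) (hinv (horbit k))
  apply tsum_sub_tsum_eq_of_sub_eq_sub_succ (u := fun k => f (β^[k] x) * conj (g (βinv (β^[k] x))))
  · exact summable_ofReal_mul_of_norm_le hw fun k => norm_mul_conj_le (hCf k) (hMg ⟨k, rfl⟩)
  · -- shifted by one, this is the weight times `-f (β^[k+1] x) * conj (D_β g (β^[k] x))`
    rw [← summable_nat_add_iff 1]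
    refine (summable_ofReal_mul_of_norm_le hw fun k =>
      (norm_neg _).le.trans (norm_mul_conj_le (hMf ⟨k + 1, rfl⟩) (hCg k))).congr fun k => ?_
    have hconj := congrArg conj (hderiv g k)
    rw [map_mul, Complex.conj_ofReal, map_sub] at hconj
    simp only [Function.comp_apply]
    rw [hadjoint, hinv_succ, map_sub]
    linear_combination (-f (β^[k + 1] x)) * hconj
  · rw [← tendsto_add_atTop_iff_nat 1]
    simp only [hinv_succ]
    exact (hfc.tendsto.comp ((tendsto_add_atTop_iff_nat 1).2 htend)).mul
      ((Complex.continuous_conj.tendsto _).comp (hgc.tendsto.comp htend))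
  · intro k
    simp only
    rw [← mul_assoc, hderiv f k, hadjoint, hinv_succ, map_sub]
    ring

theorem stmt_4_general
    (I : Set ℝ) (hIconn : I.OrdConnected)
    (β βinv : ℝ → ℝ) (s0 : ℝ)
    (hmono : StrictMonoOn β I) (hcont : ContinuousOn β I)
    (hinv : Set.InvOn βinv β I I)
    (hs0I : s0 ∈ I) (hfix : β s0 = s0)
    (hsign : ∀ t ∈ I, (t - s0) * (β t - t) ≤ 0)
    (huniq : ∀ t ∈ I, (t - s0) * (β t - t) = 0 → t = s0)
    (a b : ℝ) (ha : a ∈ I) (hb : b ∈ I) (f g : ℝ → ℂ)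
    (hfc : ContinuousAt f s0) (hgc : ContinuousAt g s0)
    (hfb : ∃ C, ∀ t ∈ insert s0 (Set.range (fun j : ℕ => β^[j] a) ∪ Set.range (fun j : ℕ => β^[j] b)), ‖Dq β s0 f t‖ ≤ C)
    (hgb : ∃ C, ∀ t ∈ insert s0 (Set.range (fun j : ℕ => β^[j] a) ∪ Set.range (fun j : ℕ => β^[j] b)), ‖Dq β s0 g t‖ ≤ C) :
    betaIntAB β a b (fun t => Dq β s0 f t * conj (g t)) =
      f b * conj (g (βinv b)) - f a * conj (g (βinv a)) +
        betaIntAB β a b (fun t => f t * conj (-(DbinvC β βinv s0 t) * Dq βinv s0 g t)) := by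
  have hβ (t : ℝ) (ht : t ∈ I) : β t = t ↔ t = s0 :=
    ⟨fun h => huniq t ht (by rw [h, sub_self, mul_zero]), fun h => h ▸ hfix⟩
  have hβinv (t : ℝ) (ht : t ∈ I) : βinv t = t ↔ t = s0 :=
    ⟨fun h => (hβ t ht).1 (by simpa only [h] using hinv.2 ht),
      fun h => h ▸ (congrArg βinv hfix.symm).trans (hinv.1 hs0I)⟩
  obtain ⟨Cf, hCf⟩ := hfb
  obtain ⟨Cg, hCg⟩ := hgb
  have key (x : ℝ) (hx : x ∈ I) (horbit : ∀ k, β^[k] x ∈ insert s0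
      (Set.range (fun j : ℕ => β^[j] a) ∪ Set.range (fun j : ℕ => β^[j] b))) :=
    betaInt_Dq_mul_conj_sub_betaInt_mul_conj (βinv := βinv) hβ hβinv hinv.1
      (iterate_mem hIconn hmono hs0I hfix hsign hx)
      (tendsto_iterate_nhds hIconn hmono hcont hs0I hfix hsign huniq hx)
      (summable_abs_iterate_sub_iterate_succ hIconn hmono hs0I hfix hsign hx) hfc hgc
      (fun k => hCf _ (horbit k)) (fun k => hCg _ (horbit k))
  have keya := key a ha fun k => Set.mem_insert_of_mem _ (Or.inl ⟨k, rfl⟩)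
  have keyb := key b hb fun k => Set.mem_insert_of_mem _ (Or.inr ⟨k, rfl⟩)
  rw [betaIntAB, betaIntAB]
  linear_combination keyb - keya

theorem stmt_4
    (I : Set ℝ) (hIconn : I.OrdConnected)
    (β βinv : ℝ → ℝ) (s0 : ℝ)
    (hmono : StrictMonoOn β I) (hcont : ContinuousOn β I)
    (hbij : Set.BijOn β I I) (hinv : Set.InvOn βinv β I I)
    (hs0I : s0 ∈ I) (hfix : β s0 = s0)
    (hsign : ∀ t ∈ I, (t - s0) * (β t - t) ≤ 0)
    (huniq : ∀ t ∈ I, (t - s0) * (β t - t) = 0 → t = s0)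
    (a b : ℝ) (ha : a ∈ I) (hb : b ∈ I) (has0 : a ≤ s0) (hs0b : s0 ≤ b) (f g : ℝ → ℂ)
    (hfL2a : Summable fun j : ℕ => (β^[j] a - β^[j + 1] a) * ‖f (β^[j] a)‖ ^ 2)
    (hfL2b : Summable fun j : ℕ => (β^[j] b - β^[j + 1] b) * ‖f (β^[j] b)‖ ^ 2)
    (hgL2a : Summable fun j : ℕ => (β^[j] a - β^[j + 1] a) * ‖g (β^[j] a)‖ ^ 2)
    (hgL2b : Summable fun j : ℕ => (β^[j] b - β^[j + 1] b) * ‖g (β^[j] b)‖ ^ 2)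
    (hfc : ContinuousAt f s0) (hgc : ContinuousAt g s0)
    (hfd : DifferentiableAt ℝ f s0) (hgd : DifferentiableAt ℝ g s0)
    (hfb : ∃ C, ∀ t ∈ insert s0 (Set.range (fun j : ℕ => β^[j] a) ∪ Set.range (fun j : ℕ => β^[j] b)), ‖Dq β s0 f t‖ ≤ C)
    (hgb : ∃ C, ∀ t ∈ insert s0 (Set.range (fun j : ℕ => β^[j] a) ∪ Set.range (fun j : ℕ => β^[j] b)), ‖Dq β s0 g t‖ ≤ C) :
    betaIntAB β a b (fun t => Dq β s0 f t * conj (g t)) =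
      f b * conj (g (βinv b)) - f a * conj (g (βinv a)) +
        betaIntAB β a b (fun t => f t * conj (-(DbinvC β βinv s0 t) * Dq βinv s0 g t)) :=
  stmt_4_general I hIconn β βinv s0 hmono hcont hinv hs0I hfix hsign huniq a b ha hb f g hfc hgc hfb
    hgb
end

section
/- Let s0 ≤ b with b ∈ I, and let y, z : I → ℂ belong to L²_β(s0,b), be continuous and differentiable at s0, with D_β y and D_β z differentiable at s0 and D_β y, D_β z, D_{β^{-1}}D_β y, D_{β^{-1}}D_β z bounded on the set {β^k(b) : k ∈ ℕ₀} ∪ {s0}. Then ⟨−(D_β β^{-1})·(D_{β^{-1}}(D_β y)), z⟩ = [y, conj z](b) − [y, conj z](s0) + ⟨y, −(D_β β^{-1})·(D_{β^{-1}}(D_β z))⟩, where the inner products are taken over (s0,b). -/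
open Function Set ComplexConjugate

/-!
Along the orbit `tₖ = β^[k] b` the β-integral is a series, and multiplying by the weight
`tₖ - β tₖ` turns the factor `D_β β⁻¹` into `tₖ - β⁻¹ tₖ`. At each orbit point the difference of
the two summands is a discrete Lagrange identity: it equals `[y, z̄](tₖ) - [y, z̄](tₖ₊₁)`, so the
difference of the two series telescopes. The orbit decreases to `s0`, the only fixed point of `β`,
so continuity of `y`, `z`, `D_β y`, `D_β z` at `s0` gives `[y, z̄](tₖ) → [y, z̄](s0)`. The series
converge absolutely because the weights `β⁻¹ tₖ - tₖ` telescope and the other factors are bounded.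
-/

open Filter Topology Asymptotics

structure IsBetaShift (I : Set ℝ) (β : ℝ → ℝ) (s0 : ℝ) : Prop where
  ordConnected : I.OrdConnected
  strictMonoOn : StrictMonoOn β I
  continuousOn : ContinuousOn β I
  mapsTo : MapsTo β I I
  mem : s0 ∈ I
  fixed : β s0 = s0
  sign_nonpos : ∀ t ∈ I, (t - s0) * (β t - t) ≤ 0
  eq_of_sign_eq_zero : ∀ t ∈ I, (t - s0) * (β t - t) = 0 → t = s0

namespace IsBetaShift

variable {I : Set ℝ} {β : ℝ → ℝ} {s0 t : ℝ}

lemma lt_apply (hβ : IsBetaShift I β s0) (ht : t ∈ I) (hst : s0 < t) : s0 < β t := by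
  simpa [hβ.fixed] using hβ.strictMonoOn hβ.mem ht hst

lemma lt_of_lt_apply (hβ : IsBetaShift I β s0) (ht : t ∈ I) (hst : s0 < β t) : s0 < t := by
  by_contra! h
  have := hβ.strictMonoOn.monotoneOn ht hβ.mem h
  linarith [hβ.fixed]

lemma apply_lt_self (hβ : IsBetaShift I β s0) (ht : t ∈ I) (hst : s0 < t) : β t < t := by
  have hneg : (t - s0) * (β t - t) < 0 :=
    (hβ.sign_nonpos t ht).lt_of_ne fun h => hst.ne' (hβ.eq_of_sign_eq_zero t ht h)
  linarith [neg_of_mul_neg_right hneg (sub_nonneg.2 hst.le)]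

lemma lt_iterate (hβ : IsBetaShift I β s0) (ht : t ∈ I) (hst : s0 < t) (k : ℕ) :
    s0 < β^[k] t := by
  induction k with
  | zero => exact hst
  | succ k ih =>
    rw [iterate_succ_apply']
    exact hβ.lt_apply (hβ.mapsTo.iterate k ht) ih

lemma antitone_iterate (hβ : IsBetaShift I β s0) (ht : t ∈ I) (hst : s0 < t) :
    Antitone fun k => β^[k] t :=
  antitone_nat_of_succ_le fun k => by
    rw [iterate_succ_apply']
    exact (hβ.apply_lt_self (hβ.mapsTo.iterate k ht) (hβ.lt_iterate ht hst k)).le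

/-- The orbit decreases to a limit in `I`, which is fixed by continuity of `β`, hence is `s0`. -/
lemma tendsto_iterate (hβ : IsBetaShift I β s0) (ht : t ∈ I) (hst : s0 < t) :
    Tendsto (fun k => β^[k] t) atTop (𝓝 s0) := by
  set L := ⨅ k, β^[k] t
  have hbdd : BddBelow (range fun k => β^[k] t) :=
    ⟨s0, by rintro _ ⟨k, rfl⟩; exact (hβ.lt_iterate ht hst k).le⟩
  have hL : Tendsto (fun k => β^[k] t) atTop (𝓝 L) :=
    tendsto_atTop_ciInf (hβ.antitone_iterate ht hst) hbdd
  have hLI : L ∈ I := hβ.ordConnected.out hβ.mem ht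
    ⟨le_ciInf fun k => (hβ.lt_iterate ht hst k).le, ciInf_le hbdd 0⟩
  have hβL : β L = L := by
    refine tendsto_nhds_unique ((hβ.continuousOn L hLI).tendsto.comp
      (tendsto_nhdsWithin_iff.2 ⟨hL, .of_forall fun k => hβ.mapsTo.iterate k ht⟩)) ?_
    exact (hL.comp (tendsto_add_atTop_nat 1)).congr fun k => iterate_succ_apply' β k t
  rwa [hβ.eq_of_sign_eq_zero L hLI (by rw [hβL, sub_self, mul_zero])] at hL

lemma hasSum_iterate_sub (hβ : IsBetaShift I β s0) (ht : t ∈ I) (hst : s0 < t) :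
    HasSum (fun k => β^[k] t - β^[k + 1] t) (t - s0) := by
  refine (hasSum_iff_tendsto_nat_of_nonneg
    (fun k => sub_nonneg.2 (hβ.antitone_iterate ht hst k.le_succ)) _).2 ?_
  simp only [Finset.sum_range_sub' (fun k => β^[k] t)]
  exact tendsto_const_nhds.sub (hβ.tendsto_iterate ht hst)

end IsBetaShift

lemma Set.LeftInvOn.apply_iterate_apply {α : Type*} {f g : α → α} {s : Set α}
    (hinv : LeftInvOn g f s) (hf : MapsTo f s s) {a : α} (ha : a ∈ s) (k : ℕ) :
    g (f^[k] (f a)) = f^[k] a := by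
  rw [← iterate_succ_apply, iterate_succ_apply']
  exact hinv (hf.iterate k ha)

section Dq

variable {γ δ : ℝ → ℝ} {s0 t p : ℝ} {f : ℝ → ℂ}

lemma Dq_of_ne (ht : t ≠ s0) : Dq γ s0 f t = (f (γ t) - f t) / (γ t - t) := if_neg ht

/-- Holds also when `γ t = t`, where both sides vanish because `x / 0 = 0`. -/
lemma Dq_mul_sub (ht : t ≠ s0) : Dq γ s0 f t * (γ t - t) = f (γ t) - f t := by
  rw [Dq_of_ne ht]
  rcases eq_or_ne (γ t) t with h | h
  · simp [h]
  · exact div_mul_cancel₀ _ (sub_ne_zero.2 (by exact_mod_cast h))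

lemma Dq_conj : Dq γ s0 (fun u => conj (f u)) t = conj (Dq γ s0 f t) := by
  unfold Dq
  split_ifs
  · exact deriv.star
  · simp [map_div₀]

lemma Dq_eq_Dq_of_swap (ht : t = s0 ↔ p = s0) (hδ : δ t = p) (hγ : γ p = t) :
    Dq δ s0 f t = Dq γ s0 f p := by
  by_cases hts : t = s0
  · simp [Dq, hts, ht.1 hts]
  · have hps : p ≠ s0 := fun h => hts (ht.2 h)
    rw [Dq_of_ne hts, Dq_of_ne hps, hδ, hγ, ← neg_div_neg_eq, neg_sub, neg_sub]

end Dq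

section Wronskian

variable {β βinv : ℝ → ℝ} {s0 t p : ℝ} {y z : ℝ → ℂ}

lemma wronk_conj_eq (ht : t = s0 ↔ p = s0) (hβinv : βinv t = p) (hβ : β p = t) :
    wronk βinv s0 y (fun u => conj (z u)) t =
      y t * conj (Dq β s0 z p) - conj (z t) * Dq β s0 y p := by
  rw [wronk, Dq_conj, Dq_eq_Dq_of_swap ht hβinv hβ, Dq_eq_Dq_of_swap ht hβinv hβ]

lemma sub_apply_mul_DbinvC (ht : t ≠ s0) (hinv : βinv (β t) = t) :
    ((t - β t : ℝ) : ℂ) * DbinvC β βinv s0 t = βinv t - t := by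
  have h := Dq_mul_sub (γ := β) (f := fun u => (βinv u : ℂ)) ht
  rw [hinv] at h
  rw [DbinvC]
  push_cast
  linear_combination -h

lemma conj_DbinvC : conj (DbinvC β βinv s0 t) = DbinvC β βinv s0 t := by
  simp only [DbinvC, ← Dq_conj, Complex.conj_ofReal]

lemma sub_apply_mul_neg_DbinvC_mul (ht : t ≠ s0) (hinv : βinv (β t) = t) (X Y : ℂ) :
    ((t - β t : ℝ) : ℂ) * (-(DbinvC β βinv s0 t) * X * Y) =
      ((t - βinv t : ℝ) : ℂ) * (X * Y) := by
  have h := sub_apply_mul_DbinvC ht hinv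
  push_cast at h ⊢
  linear_combination (-(X * Y)) * h

lemma sub_apply_mul_mul_conj_neg_DbinvC (ht : t ≠ s0) (hinv : βinv (β t) = t) (X Y : ℂ) :
    ((t - β t : ℝ) : ℂ) * (Y * conj (-(DbinvC β βinv s0 t) * X)) =
      ((t - βinv t : ℝ) : ℂ) * (Y * conj X) := by
  have h := sub_apply_mul_DbinvC ht hinv
  simp only [map_mul, map_neg, conj_DbinvC]
  push_cast at h ⊢
  linear_combination (-(Y * conj X)) * h

lemma weighted_lagrange_step (ht : t ≠ s0) (hβt : β t ≠ s0) (hp : βinv t ≠ s0)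
    (hβp : β (βinv t) = t) (hinv : βinv (β t) = t) :
    ((t - β t : ℝ) : ℂ) * (-(DbinvC β βinv s0 t) * Dq βinv s0 (Dq β s0 y) t * conj (z t)) -
        ((t - β t : ℝ) : ℂ) *
          (y t * conj (-(DbinvC β βinv s0 t) * Dq βinv s0 (Dq β s0 z) t)) =
      wronk βinv s0 y (fun u => conj (z u)) t - wronk βinv s0 y (fun u => conj (z u)) (β t) := by
  have hDDy := Dq_mul_sub (γ := βinv) (f := Dq β s0 y) ht
  have hDDz := congrArg conj (Dq_mul_sub (γ := βinv) (f := Dq β s0 z) ht)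
  have hDy := Dq_mul_sub (γ := β) (f := y) ht
  have hDz := congrArg conj (Dq_mul_sub (γ := β) (f := z) ht)
  rw [sub_apply_mul_neg_DbinvC_mul ht hinv, sub_apply_mul_mul_conj_neg_DbinvC ht hinv,
    wronk_conj_eq (iff_of_false ht hp) rfl hβp, wronk_conj_eq (iff_of_false hβt ht) hinv rfl]
  simp only [map_mul, map_sub, Complex.conj_ofReal] at hDDz hDz
  push_cast
  linear_combination -conj (z t) * hDDy + y t * hDDz + Dq β s0 y t * hDz -
    conj (Dq β s0 z t) * hDy

end Wronskian

lemma tsum_sub_succ_of_tendsto {G : Type*} [AddCommGroup G] [TopologicalSpace G]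
    [IsTopologicalAddGroup G] [T2Space G] {f : ℕ → G} {l : G}
    (hs : Summable fun n => f n - f (n + 1)) (hf : Tendsto f atTop (𝓝 l)) :
    ∑' n, (f n - f (n + 1)) = f 0 - l :=
  tendsto_nhds_unique hs.tendsto_sum_tsum_nat
    (by simpa only [Finset.sum_range_sub'] using tendsto_const_nhds.sub hf)

lemma summable_ofReal_mul_of_isBigO_one {w : ℕ → ℝ} (hw : Summable w) {g : ℕ → ℂ}
    (hg : g =O[atTop] fun _ => (1 : ℝ)) : Summable fun k => (w k : ℂ) * g k :=
  summable_of_isBigO_nat hw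
    (by simpa only [mul_one] using (Complex.isBigO_ofReal_left.2 (isBigO_refl w atTop)).mul hg)

lemma betaInt_eq_sub_add_of_telescoping {β : ℝ → ℝ} {x : ℝ} {F G W : ℝ → ℂ} {L : ℂ}
    (hF : Summable fun k => ((β^[k] x - β (β^[k] x) : ℝ) : ℂ) * F (β^[k] x))
    (hG : Summable fun k => ((β^[k] x - β (β^[k] x) : ℝ) : ℂ) * G (β^[k] x))
    (hstep : ∀ k, ((β^[k] x - β (β^[k] x) : ℝ) : ℂ) * F (β^[k] x) -
      ((β^[k] x - β (β^[k] x) : ℝ) : ℂ) * G (β^[k] x) = W (β^[k] x) - W (β (β^[k] x)))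
    (hW : Tendsto (fun k => W (β^[k] x)) atTop (𝓝 L)) :
    betaInt β x F = W x - L + betaInt β x G := by
  have h := tsum_sub_succ_of_tendsto (f := fun k => W (β^[k] x))
    (by simpa only [iterate_succ_apply', ← hstep] using hF.sub hG) hW
  simp only [iterate_succ_apply', iterate_zero_apply, ← hstep, hF.tsum_sub hG] at h
  simp only [betaInt, iterate_succ_apply']
  linear_combination h

/-- Indexing the orbit of `β a` from `a` makes `βinv` of every orbit point an orbit point. -/
theorem IsBetaShift.betaInt_lagrange_of_apply {I : Set ℝ} {β βinv : ℝ → ℝ} {s0 a : ℝ}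
    (hβ : IsBetaShift I β s0) (hinv : LeftInvOn βinv β I) (ha : a ∈ I) (hsa : s0 < a)
    {y z : ℝ → ℂ} (hyc : ContinuousAt y s0) (hzc : ContinuousAt z s0)
    (hDyc : ContinuousAt (Dq β s0 y) s0) (hDzc : ContinuousAt (Dq β s0 z) s0)
    (hDDy : (fun k => Dq βinv s0 (Dq β s0 y) (β^[k] (β a))) =O[atTop] fun _ => (1 : ℝ))
    (hDDz : (fun k => Dq βinv s0 (Dq β s0 z) (β^[k] (β a))) =O[atTop] fun _ => (1 : ℝ)) :
    betaInt β (β a) (fun t => -(DbinvC β βinv s0 t) * Dq βinv s0 (Dq β s0 y) t * conj (z t)) =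
      wronk βinv s0 y (fun t => conj (z t)) (β a) - wronk βinv s0 y (fun t => conj (z t)) s0 +
        betaInt β (β a)
          (fun t => y t * conj (-(DbinvC β βinv s0 t) * Dq βinv s0 (Dq β s0 z) t)) := by
  have hβa : β a ∈ I := hβ.mapsTo ha
  have hsβa : s0 < β a := hβ.lt_apply ha hsa
  have hne k : β^[k] (β a) ≠ s0 := (hβ.lt_iterate hβa hsβa k).ne'
  have hne' k : β^[k] a ≠ s0 := (hβ.lt_iterate ha hsa k).ne'
  have hleft k : βinv (β (β^[k] (β a))) = β^[k] (β a) := hinv (hβ.mapsTo.iterate k hβa)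
  have hback := hinv.apply_iterate_apply hβ.mapsTo ha
  have hsucc k : β (β^[k] a) = β^[k] (β a) := (iterate_succ_apply' β k a).symm
  have hlim := hβ.tendsto_iterate ha hsa
  have hlim' := hβ.tendsto_iterate hβa hsβa
  have hw : Summable fun k => β^[k] (β a) - β^[k] a :=
    (hβ.hasSum_iterate_sub ha hsa).summable.neg.congr fun k => neg_sub _ _
  have hconj {f : ℕ → ℂ} {c : ℂ} (hf : Tendsto f atTop (𝓝 c)) :
      Tendsto (fun k => conj (f k)) atTop (𝓝 (conj c)) :=
    (Complex.continuous_conj.tendsto c).comp hf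
  refine betaInt_eq_sub_add_of_telescoping ?_ ?_ (fun k => ?_) ?_
  · have hz := (hconj (hzc.tendsto.comp hlim')).isBigO_one ℝ
    simp only [sub_apply_mul_neg_DbinvC_mul (hne _) (hleft _), hback]
    exact summable_ofReal_mul_of_isBigO_one hw
      (by simpa only [mul_one, comp_apply] using hDDy.mul hz)
  · simp only [sub_apply_mul_mul_conj_neg_DbinvC (hne _) (hleft _), hback]
    have hDDz' : (fun k => conj (Dq βinv s0 (Dq β s0 z) (β^[k] (β a)))) =O[atTop]
        fun _ => (1 : ℝ) :=
      .of_norm_left (by simpa only [Complex.norm_conj] using hDDz.norm_left)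
    have hy := (hyc.tendsto.comp hlim').isBigO_one ℝ
    exact summable_ofReal_mul_of_isBigO_one hw
      (by simpa only [mul_one, comp_apply] using hy.mul hDDz')
  · exact weighted_lagrange_step (hne k)
      ((iterate_succ_apply' β k (β a)).symm.trans_ne (hne (k + 1)))
      ((hback k).trans_ne (hne' k))
      ((congrArg β (hback k)).trans (hsucc k)) (hleft k)
  · rw [wronk_conj_eq Iff.rfl (by simpa [hβ.fixed] using hinv hβ.mem) hβ.fixed]
    refine (((hyc.tendsto.comp hlim').mul (hconj (hDzc.tendsto.comp hlim))).sub
      ((hconj (hzc.tendsto.comp hlim')).mul (hDyc.tendsto.comp hlim))).congr fun k => ?_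
    exact (wronk_conj_eq (iff_of_false (hne k) (hne' k)) (hback k) (hsucc k)).symm

theorem stmt_5_general
    (I : Set ℝ) (hIconn : I.OrdConnected)
    (β βinv : ℝ → ℝ) (s0 : ℝ)
    (hmono : StrictMonoOn β I) (hcont : ContinuousOn β I)
    (hbij : Set.BijOn β I I) (hinv : Set.InvOn βinv β I I)
    (hs0I : s0 ∈ I) (hfix : β s0 = s0)
    (hsign : ∀ t ∈ I, (t - s0) * (β t - t) ≤ 0)
    (huniq : ∀ t ∈ I, (t - s0) * (β t - t) = 0 → t = s0)
    (b : ℝ) (hb : b ∈ I) (hs0b : s0 ≤ b) (y z : ℝ → ℂ)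
    (hyc : ContinuousAt y s0) (hzc : ContinuousAt z s0)
    (hDyd : DifferentiableAt ℝ (Dq β s0 y) s0) (hDzd : DifferentiableAt ℝ (Dq β s0 z) s0)
    (hDDyb : ∃ C, ∀ t ∈ insert s0 (Set.range fun j : ℕ => β^[j] b), ‖Dq βinv s0 (Dq β s0 y) t‖ ≤ C)
    (hDDzb : ∃ C, ∀ t ∈ insert s0 (Set.range fun j : ℕ => β^[j] b), ‖Dq βinv s0 (Dq β s0 z) t‖ ≤ C) :
    betaInt β b (fun t => -(DbinvC β βinv s0 t) * Dq βinv s0 (Dq β s0 y) t * conj (z t)) =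
      wronk βinv s0 y (fun t => conj (z t)) b - wronk βinv s0 y (fun t => conj (z t)) s0 +
        betaInt β b (fun t => y t * conj (-(DbinvC β βinv s0 t) * Dq βinv s0 (Dq β s0 z) t)) := by
  have hβ : IsBetaShift I β s0 := ⟨hIconn, hmono, hcont, hbij.mapsTo, hs0I, hfix, hsign, huniq⟩
  rcases hs0b.eq_or_lt with rfl | hlt
  · simp [betaInt, iterate_fixed hfix]
  obtain ⟨a, ha, rfl⟩ := hbij.surjOn hb
  have horbit {f : ℝ → ℂ} (hf : ∃ C, ∀ t ∈ insert s0 (range fun j : ℕ => β^[j] (β a)), ‖f t‖ ≤ C) :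
      (fun k => f (β^[k] (β a))) =O[atTop] fun _ => (1 : ℝ) := by
    obtain ⟨C, hC⟩ := hf
    exact .of_bound C (.of_forall fun k => by simpa using hC _ (Or.inr ⟨k, rfl⟩))
  exact hβ.betaInt_lagrange_of_apply hinv.1 ha (hβ.lt_of_lt_apply ha hlt) hyc hzc
    hDyd.continuousAt hDzd.continuousAt (horbit hDDyb) (horbit hDDzb)

theorem stmt_5
    (I : Set ℝ) (hIconn : I.OrdConnected)
    (β βinv : ℝ → ℝ) (s0 : ℝ)
    (hmono : StrictMonoOn β I) (hcont : ContinuousOn β I)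
    (hbij : Set.BijOn β I I) (hinv : Set.InvOn βinv β I I)
    (hs0I : s0 ∈ I) (hfix : β s0 = s0)
    (hsign : ∀ t ∈ I, (t - s0) * (β t - t) ≤ 0)
    (huniq : ∀ t ∈ I, (t - s0) * (β t - t) = 0 → t = s0)
    (b : ℝ) (hb : b ∈ I) (hs0b : s0 ≤ b) (y z : ℝ → ℂ)
    (hyL2 : Summable fun j : ℕ => (β^[j] b - β^[j + 1] b) * ‖y (β^[j] b)‖ ^ 2)
    (hzL2 : Summable fun j : ℕ => (β^[j] b - β^[j + 1] b) * ‖z (β^[j] b)‖ ^ 2)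
    (hyc : ContinuousAt y s0) (hzc : ContinuousAt z s0)
    (hyd : DifferentiableAt ℝ y s0) (hzd : DifferentiableAt ℝ z s0)
    (hDyd : DifferentiableAt ℝ (Dq β s0 y) s0) (hDzd : DifferentiableAt ℝ (Dq β s0 z) s0)
    (hDyb : ∃ C, ∀ t ∈ insert s0 (Set.range fun j : ℕ => β^[j] b), ‖Dq β s0 y t‖ ≤ C)
    (hDzb : ∃ C, ∀ t ∈ insert s0 (Set.range fun j : ℕ => β^[j] b), ‖Dq β s0 z t‖ ≤ C)
    (hDDyb : ∃ C, ∀ t ∈ insert s0 (Set.range fun j : ℕ => β^[j] b), ‖Dq βinv s0 (Dq β s0 y) t‖ ≤ C)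
    (hDDzb : ∃ C, ∀ t ∈ insert s0 (Set.range fun j : ℕ => β^[j] b), ‖Dq βinv s0 (Dq β s0 z) t‖ ≤ C) :
    betaInt β b (fun t => -(DbinvC β βinv s0 t) * Dq βinv s0 (Dq β s0 y) t * conj (z t)) =
      wronk βinv s0 y (fun t => conj (z t)) b - wronk βinv s0 y (fun t => conj (z t)) s0 +
        betaInt β b (fun t => y t * conj (-(DbinvC β βinv s0 t) * Dq βinv s0 (Dq β s0 z) t)) :=
  stmt_5_general I hIconn β βinv s0 hmono hcont hbij hinv hs0I hfix hsign huniq b hb hs0b y z hyc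
    hzc hDyd hDzd hDDyb hDDzb
end

section
/- (Reality of eigenvalues on (s0,b).) Let s0 ≤ b with b ∈ I, let r : I → ℝ be continuous on [s0,b], and let a1, a2, b1, b2 be real numbers with |a1| + |a2| ≠ 0 and |b1| + |b2| ≠ 0. Suppose λ0 ∈ ℂ and y0 : I → ℂ belongs to L²_β(s0,b), is continuous and differentiable at s0, has D_β y0 differentiable at s0 and D_β y0, D_{β^{-1}}D_β y0 bounded on {β^k(b) : k ∈ ℕ₀} ∪ {s0}, satisfies ℓ_β y0(t) = λ0·y0(t) for all t in {β^k(b) : k ∈ ℕ₀} ∪ {s0}, satisfies the boundary conditions a1·y0(s0) + a2·(D_{β^{-1}}y0)(s0) = 0 and b1·y0(b) + b2·(D_{β^{-1}}y0)(b) = 0, and has ∫_{s0}^{b} |y0|² d_β > 0. Then λ0 is real. -/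
open Function Set ComplexConjugate

private lemma key_alg (A B U lam R p q w : ℂ) (hqp : q - p ≠ 0) (hwp : w - p ≠ 0)
    (heig : -((p - w) / (q - p)) * (((A - U) / (p - w) - (B - A) / (q - p)) / (w - p)) + R * A
      = lam * A) :
    (U - A) / (w - p) - (A - B) / (p - q) = (lam - R) * A * (q - p) := by
  have hd : ∀ x y u v : ℂ, (x - y) / (u - v) = (y - x) / (v - u) := by
    intro x y u v; rw [← neg_div_neg_eq, neg_sub, neg_sub]
  have e1 : -((p - w) / (q - p)) * (((A - U) / (p - w) - (B - A) / (q - p)) / (w - p))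
      = ((U - A) / (w - p) - (A - B) / (p - q)) / (q - p) := by
    rw [hd A U p w, hd B A q p]
    set Y := (U - A) / (w - p) - (A - B) / (p - q) with hY
    field_simp
    ring
  rw [e1] at heig
  have e2 : ((U - A) / (w - p) - (A - B) / (p - q)) / (q - p) = lam * A - R * A := by
    linear_combination heig
  rw [div_eq_iff hqp] at e2
  linear_combination e2

private lemma bc_aux (c1 c2 : ℝ) (h : |c1| + |c2| ≠ 0) (u v : ℂ)
    (hbc : (c1 : ℂ) * u + (c2 : ℂ) * v = 0) : u * conj v - conj u * v = 0 := by
  by_cases h2 : c2 = 0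
  · have h1 : c1 ≠ 0 := fun h1 => h (by simp [h1, h2])
    have hu : u = 0 := by
      have hbc' : (c1 : ℂ) * u = 0 := by simpa [h2] using hbc
      rcases mul_eq_zero.1 hbc' with h' | h'
      · exact absurd (by exact_mod_cast h') h1
      · exact h'
    simp [hu]
  · have h2' : (c2 : ℂ) ≠ 0 := Complex.ofReal_ne_zero.2 h2
    have hv : v = -((c1 : ℂ) / c2) * u := by
      field_simp
      linear_combination hbc
    rw [hv, map_mul, map_neg, map_div₀, Complex.conj_ofReal, Complex.conj_ofReal]
    ring

theorem stmt_8
    (I : Set ℝ) (hIconn : I.OrdConnected)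
    (β βinv : ℝ → ℝ) (s0 : ℝ)
    (hmono : StrictMonoOn β I) (hcont : ContinuousOn β I)
    (hbij : Set.BijOn β I I) (hinv : Set.InvOn βinv β I I)
    (hs0I : s0 ∈ I) (hfix : β s0 = s0)
    (hsign : ∀ t ∈ I, (t - s0) * (β t - t) ≤ 0)
    (huniq : ∀ t ∈ I, (t - s0) * (β t - t) = 0 → t = s0)
    (b : ℝ) (hb : b ∈ I) (hs0b : s0 ≤ b)
    (r : ℝ → ℝ) (hr : ContinuousOn r (Set.Icc s0 b))
    (a1 a2 b1 b2 : ℝ) (ha12 : |a1| + |a2| ≠ 0) (hb12 : |b1| + |b2| ≠ 0)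
    (lam0 : ℂ) (y0 : ℝ → ℂ)
    (hy0L2 : Summable fun j : ℕ => (β^[j] b - β^[j + 1] b) * ‖y0 (β^[j] b)‖ ^ 2)
    (hy0c : ContinuousAt y0 s0) (hy0d : DifferentiableAt ℝ y0 s0)
    (hDy0d : DifferentiableAt ℝ (Dq β s0 y0) s0)
    (hDy0b : ∃ C, ∀ t ∈ insert s0 (Set.range fun j : ℕ => β^[j] b), ‖Dq β s0 y0 t‖ ≤ C)
    (hDDy0b : ∃ C, ∀ t ∈ insert s0 (Set.range fun j : ℕ => β^[j] b), ‖Dq βinv s0 (Dq β s0 y0) t‖ ≤ C)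
    (hy0eig : ∀ t ∈ insert s0 (Set.range fun j : ℕ => β^[j] b), ellBeta β βinv s0 r y0 t = lam0 * y0 t)
    (hy0bc1 : (a1 : ℂ) * y0 s0 + (a2 : ℂ) * Dq βinv s0 y0 s0 = 0)
    (hy0bc2 : (b1 : ℂ) * y0 b + (b2 : ℂ) * Dq βinv s0 y0 b = 0)
    (hy0pos : 0 < betaIntR β b fun t => ‖y0 t‖ ^ 2) :
    lam0.im = 0 := by
  rcases eq_or_lt_of_le hs0b with hbe | hbs
  · exfalso
    have hit : ∀ k : ℕ, β^[k] b = b := by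
      intro k; rw [← hbe]; exact Function.iterate_fixed hfix k
    have hz : betaIntR β b (fun t => ‖y0 t‖ ^ 2) = 0 := by
      unfold betaIntR
      simp [hit]
    rw [hz] at hy0pos; exact lt_irrefl 0 hy0pos
  · have hsucc : ∀ k : ℕ, β^[k+1] b = β (β^[k] b) := fun k => Function.iterate_succ_apply' β k b
    have htI : ∀ k, β^[k] b ∈ I := by
      intro k; induction k with
      | zero => simpa using hb
      | succ n ih => rw [hsucc]; exact hbij.mapsTo ih
    have hts0 : ∀ k, s0 < β^[k] b := by
      intro k; induction k with
      | zero => simpa using hbs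
      | succ n ih =>
        rw [hsucc]
        calc s0 = β s0 := hfix.symm
          _ < β (β^[n] b) := hmono hs0I (htI n) ih
    have htne : ∀ k, β^[k] b ≠ s0 := fun k => (hts0 k).ne'
    have hblt : ∀ k, β (β^[k] b) < β^[k] b := by
      intro k
      rcases lt_or_eq_of_le (hsign _ (htI k)) with hlt | heq
      · nlinarith [hts0 k]
      · exact absurd (huniq _ (htI k) heq) (htne k)
    have hstep : ∀ k, β^[k+1] b < β^[k] b := fun k => (hsucc k) ▸ hblt k
    have hinvt : ∀ k, βinv (β^[k+1] b) = β^[k] b := by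
      intro k; rw [hsucc]; exact hinv.1 (htI k)
    have hbrt : ∀ k, β (βinv (β^[k] b)) = β^[k] b := by
      intro k
      cases k with
      | zero => simpa using hinv.2 hb
      | succ n => rw [hinvt n]; exact (hsucc n).symm
    have hbinvne : ∀ k, βinv (β^[k] b) ≠ s0 := by
      intro k h
      have h2 := hbrt k
      rw [h, hfix] at h2
      exact (htne k) h2.symm
    have hbinvnet : ∀ k, βinv (β^[k] b) ≠ β^[k] b := by
      intro k h
      have h2 := hbrt k
      rw [h] at h2
      exact absurd h2 (ne_of_lt (hblt k))
    have hDBt : ∀ k, Dq β s0 y0 (β^[k] b) =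
        (y0 (β^[k+1] b) - y0 (β^[k] b)) / (((β^[k+1] b : ℝ) : ℂ) - ((β^[k] b : ℝ) : ℂ)) := by
      intro k
      simp only [Dq, if_neg (htne k)]
      rw [← hsucc k]
    have hDIt : ∀ k, Dq βinv s0 y0 (β^[k+1] b) =
        (y0 (β^[k] b) - y0 (β^[k+1] b)) / (((β^[k] b : ℝ) : ℂ) - ((β^[k+1] b : ℝ) : ℂ)) := by
      intro k
      simp only [Dq, if_neg (htne (k+1)), hinvt k]
    have hswap : ∀ k, Dq βinv s0 y0 (β^[k+1] b) = Dq β s0 y0 (β^[k] b) := by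
      intro k
      rw [hDIt k, hDBt k, ← neg_div_neg_eq, neg_sub, neg_sub]
    have hqp : ∀ k, (((β^[k+1] b : ℝ) : ℂ) - ((β^[k] b : ℝ) : ℂ)) ≠ 0 := by
      intro k
      rw [sub_ne_zero]
      exact_mod_cast (ne_of_lt (hstep k))
    have hpq : ∀ k, (((β^[k] b : ℝ) : ℂ) - ((β^[k+1] b : ℝ) : ℂ)) ≠ 0 := by
      intro k
      rw [sub_ne_zero]
      exact_mod_cast (ne_of_gt (hstep k))
    have hwp : ∀ k, (((βinv (β^[k] b) : ℝ) : ℂ) - ((β^[k] b : ℝ) : ℂ)) ≠ 0 := by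
      intro k
      rw [sub_ne_zero]
      exact_mod_cast hbinvnet k
    have key : ∀ k, Dq βinv s0 y0 (β^[k] b) - Dq βinv s0 y0 (β^[k+1] b)
        = (lam0 - (r (β^[k] b) : ℂ)) * y0 (β^[k] b) * (((β^[k+1] b : ℝ) : ℂ) - ((β^[k] b : ℝ) : ℂ)) := by
      intro k
      have heig := hy0eig (β^[k] b) (Set.mem_insert_iff.2 (Or.inr ⟨k, rfl⟩))
      simp only [ellBeta, DbinvC, Dq, if_neg (htne k), if_neg (hbinvne k)] at heig
      rw [hinv.1 (htI k), hbrt k, ← hsucc k] at heig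
      rw [hDIt k]
      simp only [Dq, if_neg (htne k)]
      exact key_alg _ _ _ _ _ _ _ _ (hqp k) (hwp k) heig
    have ckey : ∀ k, conj (Dq βinv s0 y0 (β^[k] b)) - conj (Dq βinv s0 y0 (β^[k+1] b))
        = (conj lam0 - (r (β^[k] b) : ℂ)) * conj (y0 (β^[k] b)) * (((β^[k+1] b : ℝ) : ℂ) - ((β^[k] b : ℝ) : ℂ)) := by
      intro k
      have h := congrArg conj (key k)
      simpa [map_sub, map_mul, Complex.conj_ofReal] using h
    set W : ℕ → ℂ := fun k => y0 (β^[k] b) * conj (Dq βinv s0 y0 (β^[k] b))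
        - conj (y0 (β^[k] b)) * Dq βinv s0 y0 (β^[k] b) with hWdef
    have Wkey : ∀ k, W k - W (k+1) = (lam0 - conj lam0) * ((‖y0 (β^[k] b)‖^2 : ℝ) : ℂ)
        * (((β^[k] b : ℝ) : ℂ) - ((β^[k+1] b : ℝ) : ℂ)) := by
      intro k
      have hB : Dq βinv s0 y0 (β^[k+1] b) * (((β^[k] b : ℝ) : ℂ) - ((β^[k+1] b : ℝ) : ℂ))
          = y0 (β^[k] b) - y0 (β^[k+1] b) := (eq_div_iff (hpq k)).1 (hDIt k)
      have hcB := congrArg conj hB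
      simp only [map_sub, map_mul, Complex.conj_ofReal] at hcB
      have hnorm : y0 (β^[k] b) * conj (y0 (β^[k] b)) = ((‖y0 (β^[k] b)‖^2 : ℝ) : ℂ) := by
        rw [Complex.mul_conj']
        norm_cast
      simp only [hWdef]
      linear_combination y0 (β^[k] b) * ckey k - conj (y0 (β^[k] b)) * key k
        - conj (Dq βinv s0 y0 (β^[k+1] b)) * hB + Dq βinv s0 y0 (β^[k+1] b) * hcB
        + (lam0 - conj lam0) * (((β^[k] b : ℝ) : ℂ) - ((β^[k+1] b : ℝ) : ℂ)) * hnorm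
    have htel : ∀ n, W 0 - W n = (lam0 - conj lam0)
        * ((∑ i ∈ Finset.range n, (β^[i] b - β^[i+1] b) * ‖y0 (β^[i] b)‖^2 : ℝ) : ℂ) := by
      intro n
      rw [← Finset.sum_range_sub' W n]
      push_cast
      rw [Finset.mul_sum]
      refine Finset.sum_congr rfl fun i _ => ?_
      rw [Wkey i]
      push_cast
      ring
    have hanti : StrictAnti (fun n : ℕ => β^[n] b) := strictAnti_nat_of_succ_lt hstep
    have hbdd : BddBelow (Set.range fun n : ℕ => β^[n] b) := by
      refine ⟨s0, ?_⟩
      rintro x ⟨n, rfl⟩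
      exact (hts0 n).le
    have htlim : Filter.Tendsto (fun n : ℕ => β^[n] b) Filter.atTop (nhds s0) := by
      have hinf := tendsto_atTop_ciInf hanti.antitone hbdd
      set L := ⨅ n : ℕ, β^[n] b with hLdef
      have hs0L : s0 ≤ L := le_ciInf fun n => (hts0 n).le
      have hLb : L ≤ b := by simpa using ciInf_le hbdd 0
      have hLI : L ∈ I := hIconn.out hs0I hb ⟨hs0L, hLb⟩
      have hwithin : Filter.Tendsto (fun n : ℕ => β^[n] b) Filter.atTop (nhdsWithin L I) :=
        tendsto_nhdsWithin_of_tendsto_nhds_of_eventually_within _ hinf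
          (Filter.Eventually.of_forall htI)
      have hcomp : Filter.Tendsto (fun n : ℕ => β (β^[n] b)) Filter.atTop (nhds (β L)) :=
        (hcont L hLI).tendsto.comp hwithin
      have hcomp2 : Filter.Tendsto (fun n : ℕ => β^[n+1] b) Filter.atTop (nhds L) :=
        hinf.comp (Filter.tendsto_add_atTop_nat 1)
      have hfixL : β L = L := by
        refine tendsto_nhds_unique ?_ hcomp2
        exact hcomp.congr fun n => (hsucc n).symm
      have hLs0 : L = s0 := huniq L hLI (by rw [hfixL]; ring)
      rwa [hLs0] at hinf
    have hylim : Filter.Tendsto (fun n : ℕ => y0 (β^[n] b)) Filter.atTop (nhds (y0 s0)) :=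
      hy0c.tendsto.comp htlim
    have hglim : Filter.Tendsto (fun n : ℕ => Dq βinv s0 y0 (β^[n+1] b)) Filter.atTop
        (nhds (deriv y0 s0)) := by
      have h1 : Filter.Tendsto (fun n : ℕ => Dq β s0 y0 (β^[n] b)) Filter.atTop
          (nhds (deriv y0 s0)) := by
        have h2 := (hDy0d.continuousAt.tendsto).comp htlim
        have h3 : Dq β s0 y0 s0 = deriv y0 s0 := by simp [Dq]
        rwa [h3] at h2
      exact h1.congr fun n => (hswap n).symm
    have hWlim : Filter.Tendsto (fun n : ℕ => W (n+1)) Filter.atTop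
        (nhds (y0 s0 * conj (deriv y0 s0) - conj (y0 s0) * deriv y0 s0)) := by
      have hylim' : Filter.Tendsto (fun n : ℕ => y0 (β^[n+1] b)) Filter.atTop (nhds (y0 s0)) :=
        hylim.comp (Filter.tendsto_add_atTop_nat 1)
      have hcy : Filter.Tendsto (fun n : ℕ => conj (y0 (β^[n+1] b))) Filter.atTop
          (nhds (conj (y0 s0))) := by
        exact (Complex.continuous_conj.tendsto _).comp hylim'
      have hcg : Filter.Tendsto (fun n : ℕ => conj (Dq βinv s0 y0 (β^[n+1] b))) Filter.atTop
          (nhds (conj (deriv y0 s0))) := by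
        exact (Complex.continuous_conj.tendsto _).comp hglim
      exact (hylim'.mul hcg).sub (hcy.mul hglim)
    have hWlim0 : y0 s0 * conj (deriv y0 s0) - conj (y0 s0) * deriv y0 s0 = 0 := by
      apply bc_aux a1 a2 ha12
      simpa [Dq] using hy0bc1
    have hW0 : W 0 = 0 := by
      simp only [hWdef, Function.iterate_zero_apply]
      exact bc_aux b1 b2 hb12 (y0 b) (Dq βinv s0 y0 b) hy0bc2
    have hSsum : Filter.Tendsto
        (fun n : ℕ => ∑ i ∈ Finset.range n, (β^[i] b - β^[i+1] b) * ‖y0 (β^[i] b)‖^2)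
        Filter.atTop (nhds (betaIntR β b fun t => ‖y0 t‖^2)) := by
      unfold betaIntR
      exact hy0L2.hasSum.tendsto_sum_nat
    have hWlim2 : Filter.Tendsto (fun n : ℕ => W n) Filter.atTop
        (nhds (-((lam0 - conj lam0) * ((betaIntR β b fun t => ‖y0 t‖^2 : ℝ) : ℂ)))) := by
      have h1 : Filter.Tendsto
          (fun n : ℕ => ((∑ i ∈ Finset.range n, (β^[i] b - β^[i+1] b) * ‖y0 (β^[i] b)‖^2 : ℝ) : ℂ))
          Filter.atTop (nhds ((betaIntR β b fun t => ‖y0 t‖^2 : ℝ) : ℂ)) :=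
        (Complex.continuous_ofReal.tendsto _).comp hSsum
      have h2 := (h1.const_mul (lam0 - conj lam0)).neg
      refine h2.congr fun n => ?_
      have h3 := htel n
      rw [hW0] at h3
      linear_combination h3
    have hfin := tendsto_nhds_unique (hWlim2.comp (Filter.tendsto_add_atTop_nat 1)) hWlim
    rw [hWlim0] at hfin
    have hS : ((betaIntR β b fun t => ‖y0 t‖^2 : ℝ) : ℂ) ≠ 0 :=
      Complex.ofReal_ne_zero.2 (ne_of_gt hy0pos)
    have hsub : lam0 - conj lam0 = 0 := by
      rcases mul_eq_zero.1 (neg_eq_zero.1 hfin) with h | h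
      · exact h
      · exact absurd h hS
    exact Complex.conj_eq_iff_im.1 (sub_eq_zero.1 hsub).symm
end
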